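/- For every real number λ and every real number x, the formal power series F(t) = Σ_{n=0}^{∞} φ_{n,λ}(x) t^n/n! over ℝ satisfies the differential equation F′(t) = x · e_λ^{1−λ}(t) · F(t), where F′ denotes the formal derivative in t and e_λ^{1−λ}(t) = Σ_{n=0}^{∞} (1−λ)_{n,λ} t^n/n!. (This is the differential equation (27)/(28) satisfied by the generating function of the degenerate Bell polynomials.) -/

import Mathlib

open Finset

/-- Generalized falling factorial `(x)_{n,λ} = x(x-λ)⋯(x-(n-1)λ)`. -/
noncomputable def dfall (lam x : ℝ) (n : ℕ) : ℝ := ∏ i ∈ Finset.range n, (x - i * lam)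

/-- Ordinary falling factorial `(x)_n = x(x-1)⋯(x-n+1)`. -/
noncomputable def ffall (x : ℝ) (n : ℕ) : ℝ := ∏ i ∈ Finset.range n, (x - i)

/-- Degenerate Stirling numbers of the second kind, defined by the recurrence
`S_{2,λ}(0,0)=1`, `S_{2,λ}(n,k)=0` for `k>n` (and `k<0`), and
`S_{2,λ}(n+1,k) = S_{2,λ}(n,k-1) + (k-nλ) S_{2,λ}(n,k)`. -/
noncomputable def dStir (lam : ℝ) : ℕ → ℕ → ℝ
  | 0, 0 => 1
  | 0, _ + 1 => 0
  | n + 1, 0 => ((0 : ℝ) - n * lam) * dStir lam n 0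
  | n + 1, k + 1 => dStir lam n k + (((k : ℝ) + 1) - n * lam) * dStir lam n (k + 1)

/-- Degenerate Bell polynomials `φ_{n,λ}(x) = Σ_{k=0}^n S_{2,λ}(n,k) x^k`. -/
noncomputable def dBell (lam x : ℝ) (n : ℕ) : ℝ :=
  ∑ k ∈ Finset.range (n + 1), dStir lam n k * x ^ k
/-- The degenerate exponential function `e_λ^y(t) = Σ_{n} (y)_{n,λ} t^n/n!`
as a formal power series over `ℝ`. -/
noncomputable def degExp (lam y : ℝ) : PowerSeries ℝ :=
  PowerSeries.mk fun n => dfall lam y n / n.factorial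

/-!
Comparing coefficients of `tⁿ/n!`, the equation says
`φ_{n+1,λ}(x) = x ∑_{i+j=n} C(n,i) (1-λ)_{i,λ} φ_{j,λ}(x)`.
This is inherited from the same convolution identity
`S_{2,λ}(n+1,k+1) = ∑_{i+j=n} C(n,i) (1-λ)_{i,λ} S_{2,λ}(j,k)`,
which follows by induction on `n` from the triangular recurrence, Pascal's rule and
`(y)_{i+1,λ} = (y)_{i,λ} (y - iλ)`.
-/

namespace PowerSeries

variable {K : Type*} [Field K] [CharZero K]

theorem coeff_derivative_mk_div_factorial (a : ℕ → K) (n : ℕ) :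
    coeff n (derivative K (mk fun n => a n / n.factorial)) = a (n + 1) / n.factorial := by
  rw [coeff_derivative, coeff_mk, Nat.factorial_succ]
  push_cast
  field_simp

theorem coeff_mk_div_factorial_mul (a b : ℕ → K) (n : ℕ) :
    coeff n ((mk fun n => a n / n.factorial) * mk fun n => b n / n.factorial) =
      (∑ p ∈ antidiagonal n, (n.choose p.1 : K) * a p.1 * b p.2) / n.factorial := by
  rw [coeff_mul, sum_div]
  refine sum_congr rfl fun p hp => ?_
  obtain rfl := mem_antidiagonal.mp hp
  have hchoose : ((p.1 + p.2).choose p.2 : K) ≠ 0 :=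
    Nat.cast_ne_zero.mpr (Nat.choose_pos (Nat.le_add_left _ _)).ne'
  rw [coeff_mk, coeff_mk, Nat.choose_symm_add, ← Nat.add_choose_mul_factorial_mul_factorial]
  push_cast
  field_simp

end PowerSeries

theorem dfall_succ (lam y : ℝ) (n : ℕ) : dfall lam y (n + 1) = dfall lam y n * (y - n * lam) :=
  prod_range_succ _ n

theorem sum_antidiagonal_succ_choose_mul_dfall (lam y : ℝ) (g : ℕ → ℝ) (n : ℕ) :
    ∑ p ∈ antidiagonal (n + 1), ((n + 1).choose p.1 : ℝ) * dfall lam y p.1 * g p.2 =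
      ∑ p ∈ antidiagonal n, (n.choose p.1 : ℝ) * dfall lam y p.1 *
        (g (p.2 + 1) + (y - n * lam + p.2 * lam) * g p.2) := by
  simp only [mul_assoc]
  rw [sum_antidiagonal_choose_succ_mul (fun i j => dfall lam y i * g j), ← sum_add_distrib]
  refine sum_congr rfl fun p hp => ?_
  have hn : (p.1 : ℝ) + p.2 = n := by exact_mod_cast mem_antidiagonal.mp hp
  rw [← Nat.choose_symm_of_eq_add (mem_antidiagonal.mp hp).symm, dfall_succ]
  linear_combination -(n.choose p.1 * dfall lam y p.1 * g p.2 * lam) * hn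

theorem dStir_succ_zero (lam : ℝ) (n : ℕ) : dStir lam (n + 1) 0 = 0 := by
  induction n with
  | zero => simp [dStir]
  | succ n ih => rw [dStir, ih, mul_zero]

theorem dStir_eq_zero_of_lt (lam : ℝ) {n k : ℕ} (h : n < k) : dStir lam n k = 0 := by
  induction n generalizing k with
  | zero => obtain ⟨k, rfl⟩ := Nat.exists_eq_succ_of_ne_zero h.ne'; rfl
  | succ n ih =>
    obtain ⟨k, rfl⟩ := Nat.exists_eq_succ_of_ne_zero (Nat.zero_lt_of_lt h).ne'
    rw [dStir, ih (by omega), ih (by omega), mul_zero, add_zero]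

theorem dStir_succ_succ_eq_sum (lam : ℝ) (n k : ℕ) :
    dStir lam (n + 1) (k + 1) =
      ∑ p ∈ antidiagonal n,
        (n.choose p.1 : ℝ) * dfall lam (1 - lam) p.1 * dStir lam p.2 k := by
  induction n generalizing k with
  | zero => simp [dStir, dfall]
  | succ n ih =>
    rw [sum_antidiagonal_succ_choose_mul_dfall lam (1 - lam) (fun j => dStir lam j k)]
    cases k with
    | zero =>
      have hterm : ∀ j, dStir lam (j + 1) 0 + (1 - lam - n * lam + j * lam) * dStir lam j 0 =
          (1 - (n + 1) * lam) * dStir lam j 0 := fun j => by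
        rw [dStir]; ring
      simp only [hterm, mul_left_comm _ (1 - (n + 1) * lam), ← mul_sum, ← ih]
      rw [dStir, dStir_succ_zero]
      push_cast
      ring
    | succ k =>
      have hterm : ∀ j, dStir lam (j + 1) (k + 1) +
          (1 - lam - n * lam + j * lam) * dStir lam j (k + 1) =
            dStir lam j k + (k + 2 - (n + 1) * lam) * dStir lam j (k + 1) := fun j => by
        rw [dStir]; ring
      simp only [hterm, mul_add, mul_left_comm _ (k + 2 - (n + 1) * lam), sum_add_distrib,
        ← mul_sum, ← ih]
      rw [dStir]
      push_cast
      ring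

theorem dBell_eq_sum_range_of_le (lam x : ℝ) {n m : ℕ} (h : n ≤ m) :
    dBell lam x n = ∑ k ∈ range (m + 1), dStir lam n k * x ^ k := by
  refine sum_subset (range_subset_range.mpr (by omega)) fun k _ hk => ?_
  rw [dStir_eq_zero_of_lt lam (by simpa using hk), zero_mul]

theorem dBell_succ (lam x : ℝ) (n : ℕ) :
    dBell lam x (n + 1) =
      x * ∑ p ∈ antidiagonal n,
        (n.choose p.1 : ℝ) * dfall lam (1 - lam) p.1 * dBell lam x p.2 := by
  calc dBell lam x (n + 1)
        = ∑ k ∈ range (n + 1), dStir lam (n + 1) (k + 1) * x ^ (k + 1) := by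
        rw [dBell, sum_range_succ', dStir_succ_zero, zero_mul, add_zero]
    _ = x * ∑ p ∈ antidiagonal n, (n.choose p.1 : ℝ) * dfall lam (1 - lam) p.1 *
          ∑ k ∈ range (n + 1), dStir lam p.2 k * x ^ k := by
        simp only [dStir_succ_succ_eq_sum, sum_mul, mul_sum]
        rw [sum_comm]
        exact sum_congr rfl fun p _ => sum_congr rfl fun k _ => by ring
    _ = _ := by
        congr 1
        refine sum_congr rfl fun p hp => ?_
        rw [dBell_eq_sum_range_of_le lam x (HasAntidiagonal.antidiagonal.snd_le hp)]

/-- the generating function `F(t) = Σ_{n} φ_{n,λ}(x) t^n/n!` of the degenerate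
Bell polynomials satisfies the formal differential equation `F′(t) = x · e_λ^{1−λ}(t) · F(t)`. -/
theorem dBell_generatingFunction_deriv (lam x : ℝ) :
    PowerSeries.derivative ℝ (PowerSeries.mk fun n => dBell lam x n / n.factorial)
      = PowerSeries.C x * degExp lam (1 - lam)
          * PowerSeries.mk fun n => dBell lam x n / n.factorial := by
  ext n
  rw [PowerSeries.coeff_derivative_mk_div_factorial, mul_assoc, PowerSeries.coeff_C_mul, degExp,
    PowerSeries.coeff_mk_div_factorial_mul, dBell_succ, mul_div_assoc]
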